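/- Define v₁ = (−3,3), v₂ = (−2,1), v₃ = (−2,−1), v₄ = (−3,−3) in ℝ². For k ∈ ℕ with k ≥ 1, a real τ, and a, b ∈ {1, …, k}, set p_AB(a,b) = v₁ + ((a−1)/k + b/(τk²))·(v₂ − v₁) and p_BA(b,a) = v₃ + ((b−1)/k + a/(τk²))·(v₄ − v₃), and let t_AB(a,b) be the closed segment from p_AB(a,b) to p_BA(b,a); let t_CD(c,d) = −t_AB(c,d) = { −z : z ∈ t_AB(c,d) } be the reflection through the origin. Then there exists τ₀ ≥ 2 such that for every τ ≥ τ₀, every k ≥ 1, and every (a,d) ∈ {1,…,k}², there exists a closed line segment h ⊆ ℝ² satisfying: for all ã, b ∈ {1,…,k}, h ∩ t_AB(ã,b) ≠ ∅ if and only if ã = a; and for all c, d̃ ∈ {1,…,k}, h ∩ t_CD(c,d̃) ≠ ∅ if and only if d̃ = d. -/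

import Mathlib

/-!
The crossing segment runs along the line from the point of `v₁v₂` at position
`(a−1)/k + 2/(τk)` to the point of the reflected chain `−v₃v₄` at position `(d−1)/k`, overshooting
both ends by `2/(τk)` of its length. The functional `2x + y` equals `−3` on the line `v₁v₂`,
increases along the crossing segment and decreases along every left segment, so the two can only
meet within `O(1/(τk))` of `v₁v₂`. There the left segments of group `a` start just before the
crossing segment (they leave `v₁v₂` within `1/(τk)` after position `(a−1)/k`) and are met, while
every other group starts at least `1/k` away. The functional `y − 2x` plays the same role for the
right segments at the line `−v₃v₄`.
-/

noncomputable section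

/-- The point on the segment `v₁v₂` (with `v₁ = (−3,3)`, `v₂ = (−2,1)`) at relative
position `(a−1)/k + b/(τk²)` from `v₁`. -/
def pAB (τ : ℝ) (k a b : ℕ) : ℝ × ℝ :=
  ((-3 : ℝ), (3 : ℝ)) +
    (((a : ℝ) - 1) / k + (b : ℝ) / (τ * (k : ℝ) ^ 2)) •
      (((-2 : ℝ), (1 : ℝ)) - ((-3 : ℝ), (3 : ℝ)))

/-- The point on the segment `v₃v₄` (with `v₃ = (−2,−1)`, `v₄ = (−3,−3)`) at relative
position `(b−1)/k + a/(τk²)` from `v₃`. -/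
def pBA (τ : ℝ) (k b a : ℕ) : ℝ × ℝ :=
  ((-2 : ℝ), (-1 : ℝ)) +
    (((b : ℝ) - 1) / k + (a : ℝ) / (τ * (k : ℝ) ^ 2)) •
      (((-3 : ℝ), (-3 : ℝ)) - ((-2 : ℝ), (-1 : ℝ)))

/-- The left segment `t_AB(a,b)` from `p_AB(a,b)` to `p_BA(b,a)`. -/
def tAB (τ : ℝ) (k a b : ℕ) : Set (ℝ × ℝ) := segment ℝ (pAB τ k a b) (pBA τ k b a)

/-- The right segment `t_CD(c,d) = −t_AB(c,d)`, the reflection through the origin. -/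
def tCD (τ : ℝ) (k c d : ℕ) : Set (ℝ × ℝ) := (fun z : ℝ × ℝ => -z) '' tAB τ k c d

open AffineMap Set

def ptV₁V₂ (s : ℝ) : ℝ × ℝ := (-3 + s, 3 - 2 * s)

def ptV₃V₄ (t : ℝ) : ℝ × ℝ := (-2 - t, -1 - 2 * t)

def slotPos (τ : ℝ) (k a b : ℕ) : ℝ := ((a : ℝ) - 1) / k + (b : ℝ) / (τ * (k : ℝ) ^ 2)

lemma pAB_eq (τ : ℝ) (k a b : ℕ) : pAB τ k a b = ptV₁V₂ (slotPos τ k a b) := by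
  ext <;> simp only [pAB, ptV₁V₂, slotPos, Prod.fst_add, Prod.snd_add, Prod.fst_sub,
    Prod.snd_sub, Prod.smul_fst, Prod.smul_snd, smul_eq_mul] <;> ring

lemma pBA_eq (τ : ℝ) (k b a : ℕ) : pBA τ k b a = ptV₃V₄ (slotPos τ k b a) := by
  ext <;> simp only [pBA, ptV₃V₄, slotPos, Prod.fst_add, Prod.snd_add, Prod.fst_sub,
    Prod.snd_sub, Prod.smul_fst, Prod.smul_snd, smul_eq_mul] <;> ring

lemma tAB_eq (τ : ℝ) (k a b : ℕ) :
    tAB τ k a b = segment ℝ (ptV₁V₂ (slotPos τ k a b)) (ptV₃V₄ (slotPos τ k b a)) := by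
  rw [tAB, pAB_eq, pBA_eq]

lemma tCD_eq (τ : ℝ) (k c d : ℕ) :
    tCD τ k c d = segment ℝ (-ptV₃V₄ (slotPos τ k d c)) (-ptV₁V₂ (slotPos τ k c d)) := by
  rw [tCD, tAB_eq, segment_symm]
  exact image_segment ℝ (-LinearMap.id : ℝ × ℝ →ₗ[ℝ] ℝ × ℝ).toAffineMap _ _

theorem AffineMap.segment_inter_segment_nonempty_iff {E : Type*} [AddCommGroup E] [Module ℝ E]
    (f : ℝ →ᵃ[ℝ] E) {a b : ℝ} (hab : a ≤ b) (r w : E) :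
    (segment ℝ (f a) (f b) ∩ segment ℝ r w).Nonempty ↔
      ∃ u ∈ Icc a b, ∃ μ ∈ Icc (0 : ℝ) 1, f u = lineMap r w μ := by
  rw [← image_segment, segment_eq_Icc hab, segment_eq_image_lineMap]
  constructor
  · rintro ⟨_, ⟨u, hu, rfl⟩, μ, hμ, h⟩
    exact ⟨u, hu, μ, hμ, h.symm⟩
  · rintro ⟨u, hu, μ, hμ, h⟩
    exact ⟨_, ⟨u, hu, rfl⟩, μ, hμ, h.symm⟩

def crossLine (A D K : ℝ) : ℝ →ᵃ[ℝ] ℝ × ℝ := lineMap (ptV₁V₂ (A + 2 * K)) (-ptV₃V₄ D)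

lemma crossLine_fst (A D K u : ℝ) :
    (crossLine A D K u).1 = -3 + A + 2 * K + u * (5 + D - A - 2 * K) := by
  simp only [crossLine, lineMap_apply_module, ptV₁V₂, ptV₃V₄, Prod.fst_add, Prod.fst_neg,
    Prod.smul_fst, smul_eq_mul]
  ring

lemma crossLine_snd (A D K u : ℝ) :
    (crossLine A D K u).2 = 3 - 2 * A - 4 * K + u * (-2 + 2 * D + 2 * A + 4 * K) := by
  simp only [crossLine, lineMap_apply_module, ptV₁V₂, ptV₃V₄, Prod.snd_add, Prod.snd_neg,
    Prod.smul_snd, smul_eq_mul]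
  ring

section Crossing

variable {A D K : ℝ}

lemma abs_sub_le_of_crossLine_eq_left {s t u μ : ℝ} (hA : A ∈ Icc 0 1) (hD : D ∈ Icc 0 1)
    (hK : K ∈ Icc 0 (1 / 100)) (hs : s ∈ Icc 0 1) (ht : t ∈ Icc 0 1)
    (hu : u ∈ Icc (-2 * K) (1 + 2 * K)) (hμ : μ ∈ Icc 0 1)
    (h : crossLine A D K u = lineMap (ptV₁V₂ s) (ptV₃V₄ t) μ) :
    |s - (A + 2 * K)| ≤ 24 * K := by
  obtain ⟨hA0, hA1⟩ := hA; obtain ⟨hD0, hD1⟩ := hD; obtain ⟨hK0, hK1⟩ := hK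
  obtain ⟨hs0, hs1⟩ := hs; obtain ⟨ht0, ht1⟩ := ht; obtain ⟨hu0, hu1⟩ := hu
  obtain ⟨hμ0, hμ1⟩ := hμ
  have hx := congrArg Prod.fst h
  have hy := congrArg Prod.snd h
  simp only [crossLine_fst, crossLine_snd, ptV₁V₂, ptV₃V₄, lineMap_apply_module, Prod.fst_add,
    Prod.snd_add, Prod.smul_fst, Prod.smul_snd, smul_eq_mul] at hx hy
  have key : u * (8 + 4 * D) = -(μ * (2 + 4 * t)) := by linear_combination 2 * hx + hy
  have hu_nonpos : u ≤ 0 := by nlinarith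
  have hμ_le : μ ≤ 12 * K := by nlinarith
  have hdiff : s - (A + 2 * K) = u * (5 + D - A - 2 * K) - μ * (1 - t - s) := by
    linear_combination -hx
  rw [abs_le, hdiff]
  constructor <;> nlinarith

lemma abs_sub_le_of_crossLine_eq_right {S T u ν : ℝ} (hA : A ∈ Icc 0 1) (hD : D ∈ Icc 0 1)
    (hK : K ∈ Icc 0 (1 / 100)) (hS : S ∈ Icc 0 1) (hT : T ∈ Icc 0 1)
    (hu : u ∈ Icc (-2 * K) (1 + 2 * K)) (hν : ν ∈ Icc 0 1)
    (h : crossLine A D K u = lineMap (-ptV₃V₄ T) (-ptV₁V₂ S) ν) :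
    |T - D| ≤ 24 * K := by
  obtain ⟨hA0, hA1⟩ := hA; obtain ⟨hD0, hD1⟩ := hD; obtain ⟨hK0, hK1⟩ := hK
  obtain ⟨hS0, hS1⟩ := hS; obtain ⟨hT0, hT1⟩ := hT; obtain ⟨hu0, hu1⟩ := hu
  obtain ⟨hν0, hν1⟩ := hν
  have hx := congrArg Prod.fst h
  have hy := congrArg Prod.snd h
  simp only [crossLine_fst, crossLine_snd, ptV₁V₂, ptV₃V₄, lineMap_apply_module, Prod.fst_add,
    Prod.snd_add, Prod.fst_neg, Prod.snd_neg, Prod.smul_fst, Prod.smul_snd, smul_eq_mul] at hx hy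
  have key : (u - 1) * (12 - 4 * A - 8 * K) = ν * (6 - 4 * S) := by linear_combination 2 * hx - hy
  have hu_ge : 1 ≤ u := by nlinarith
  have hν_le : ν ≤ 12 * K := by nlinarith
  have hdiff : T - D = (u - 1) * (5 + D - A - 2 * K) - ν * (1 - S - T) := by
    linear_combination -hx
  rw [abs_le, hdiff]
  constructor <;> nlinarith

lemma exists_crossLine_eq_left {s t : ℝ} (hA : A ∈ Icc 0 1) (hD : D ∈ Icc 0 1)
    (hK : K ∈ Icc 0 (1 / 100)) (hs : s ∈ Icc A (A + 2 * K)) (ht : t ∈ Icc 0 1) :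
    ∃ u ∈ Icc (-2 * K) (1 + 2 * K), ∃ μ ∈ Icc (0 : ℝ) 1,
      crossLine A D K u = lineMap (ptV₁V₂ s) (ptV₃V₄ t) μ := by
  obtain ⟨hA0, hA1⟩ := hA; obtain ⟨hD0, hD1⟩ := hD; obtain ⟨hK0, hK1⟩ := hK
  obtain ⟨hAs, hsA⟩ := hs; obtain ⟨ht0, ht1⟩ := ht
  set e := A + 2 * K - s
  set N := (1 - t - s) * (8 + 4 * D) + (2 + 4 * t) * (5 + D - A - 2 * K)
  have hN : 6 ≤ N := by
    nlinarith [mul_nonneg (sub_nonneg.2 hA1) hD0, mul_nonneg (sub_nonneg.2 hA1) ht0,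
      mul_nonneg (sub_nonneg.2 hAs) (sub_nonneg.2 hD1), mul_nonneg hK0 (sub_nonneg.2 ht1)]
  have hN0 : 0 < N := by linarith
  have he0 : 0 ≤ e := by linarith
  refine ⟨-(e * (2 + 4 * t) / N), ⟨?_, ?_⟩, e * (8 + 4 * D) / N, ⟨?_, ?_⟩, ?_⟩
  · rw [neg_mul, neg_le_neg_iff, div_le_iff₀ hN0]
    nlinarith [mul_le_mul (by linarith : e ≤ 2 * K) (by linarith : 2 + 4 * t ≤ N) (by linarith)
      (by linarith)]
  · have : 0 ≤ e * (2 + 4 * t) / N := by positivity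
    linarith
  · positivity
  · rw [div_le_one hN0]
    nlinarith [mul_le_mul (by linarith : e ≤ 2 * K) (by linarith : 8 + 4 * D ≤ 12) (by linarith)
      (by linarith)]
  · ext
    · simp only [crossLine_fst, ptV₁V₂, ptV₃V₄, lineMap_apply_module, Prod.fst_add,
        Prod.smul_fst, smul_eq_mul]
      field_simp
      ring
    · simp only [crossLine_snd, ptV₁V₂, ptV₃V₄, lineMap_apply_module, Prod.snd_add,
        Prod.smul_snd, smul_eq_mul]
      field_simp
      ring

lemma exists_crossLine_eq_right {S T : ℝ} (hA : A ∈ Icc 0 1) (hD : D ∈ Icc 0 1)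
    (hK : K ∈ Icc 0 (1 / 100)) (hS : S ∈ Icc 0 1) (hT : T ∈ Icc D (D + 2 * K)) :
    ∃ u ∈ Icc (-2 * K) (1 + 2 * K), ∃ ν ∈ Icc (0 : ℝ) 1,
      crossLine A D K u = lineMap (-ptV₃V₄ T) (-ptV₁V₂ S) ν := by
  obtain ⟨hA0, hA1⟩ := hA; obtain ⟨hD0, hD1⟩ := hD; obtain ⟨hK0, hK1⟩ := hK
  obtain ⟨hS0, hS1⟩ := hS; obtain ⟨hDT, hTD⟩ := hT
  set e := T - D
  set N := (5 + D - A - 2 * K) * (6 - 4 * S) - (12 - 4 * A - 8 * K) * (1 - S - T)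
  have hN : 6 ≤ N := by
    nlinarith [mul_nonneg (sub_nonneg.2 hA1) (by linarith : (0 : ℝ) ≤ T),
      mul_nonneg hD0 (sub_nonneg.2 hS1), mul_nonneg hK0 hS0,
      mul_nonneg hK0 (sub_nonneg.2 hTD)]
  have hN0 : 0 < N := by linarith
  have he0 : 0 ≤ e := by linarith
  refine ⟨1 + e * (6 - 4 * S) / N, ⟨?_, ?_⟩, e * (12 - 4 * A - 8 * K) / N, ⟨?_, ?_⟩, ?_⟩
  · have : 0 ≤ e * (6 - 4 * S) / N := div_nonneg (mul_nonneg he0 (by linarith)) hN0.le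
    linarith
  · rw [add_le_add_iff_left, div_le_iff₀ hN0]
    nlinarith [mul_le_mul (by linarith : e ≤ 2 * K) (by linarith : 6 - 4 * S ≤ N) (by linarith)
      (by linarith)]
  · exact div_nonneg (mul_nonneg he0 (by linarith)) hN0.le
  · rw [div_le_one hN0]
    nlinarith [mul_le_mul (by linarith : e ≤ 2 * K) (by linarith : 12 - 4 * A - 8 * K ≤ 12)
      (by linarith) (by linarith)]
  · ext
    · simp only [crossLine_fst, ptV₁V₂, ptV₃V₄, lineMap_apply_module, Prod.fst_add,
        Prod.fst_neg, Prod.smul_fst, smul_eq_mul]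
      field_simp
      ring
    · simp only [crossLine_snd, ptV₁V₂, ptV₃V₄, lineMap_apply_module, Prod.snd_add,
        Prod.snd_neg, Prod.smul_snd, smul_eq_mul]
      field_simp
      ring

end Crossing

lemma sub_one_div_mem_Icc {k a : ℕ} (ha : a ∈ Finset.Icc 1 k) : ((a : ℝ) - 1) / k ∈ Icc 0 1 := by
  obtain ⟨ha1, hak⟩ := Finset.mem_Icc.1 ha
  have hk : (0 : ℝ) < k := by exact_mod_cast ha1.trans hak
  have ha1' : (1 : ℝ) ≤ a := by exact_mod_cast ha1
  have hak' : (a : ℝ) ≤ k := by exact_mod_cast hak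
  exact ⟨div_nonneg (by linarith) hk.le, (div_le_one hk).2 (by linarith)⟩

lemma slotPos_sub_mem_Icc {τ : ℝ} {k a b : ℕ} (hτ : 0 < τ) (hb : b ∈ Finset.Icc 1 k) :
    slotPos τ k a b - ((a : ℝ) - 1) / k ∈ Icc 0 (1 / (τ * k)) := by
  obtain ⟨hb1, hbk⟩ := Finset.mem_Icc.1 hb
  have hk : (0 : ℝ) < k := by exact_mod_cast hb1.trans hbk
  have hbk' : (b : ℝ) ≤ k := by exact_mod_cast hbk
  rw [slotPos, add_sub_cancel_left]
  refine ⟨by positivity, ?_⟩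
  rw [div_le_div_iff₀ (by positivity) (by positivity)]
  nlinarith [mul_pos hτ hk]

lemma slotPos_mem_Icc {τ : ℝ} {k a b : ℕ} (hτ : 1 ≤ τ) (ha : a ∈ Finset.Icc 1 k)
    (hb : b ∈ Finset.Icc 1 k) : slotPos τ k a b ∈ Icc 0 1 := by
  obtain ⟨hβ0, hβ1⟩ := slotPos_sub_mem_Icc (τ := τ) (a := a) (by linarith) hb
  obtain ⟨ha1, hak⟩ := Finset.mem_Icc.1 ha
  have hk : (0 : ℝ) < k := by exact_mod_cast ha1.trans hak
  have hak' : (a : ℝ) ≤ k := by exact_mod_cast hak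
  have hτk : 1 / (τ * k) ≤ 1 / k := one_div_le_one_div_of_le hk (by nlinarith)
  have hsum : ((a : ℝ) - 1) / k + 1 / k ≤ 1 := by
    rw [← add_div, sub_add_cancel, div_le_one hk]; exact hak'
  exact ⟨by linarith [(sub_one_div_mem_Icc ha).1], by linarith⟩

lemma eq_of_abs_slotPos_sub_le {τ x : ℝ} {k a a' b : ℕ} (hτ : 100 ≤ τ) (hb : b ∈ Finset.Icc 1 k)
    (hx : x ∈ Icc 0 (2 * (1 / (τ * k))))
    (h : |slotPos τ k a' b - (((a : ℝ) - 1) / k + x)| ≤ 24 * (1 / (τ * k))) : a' = a := by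
  obtain ⟨hβ0, hβ1⟩ := slotPos_sub_mem_Icc (τ := τ) (a := a') (by linarith) hb
  obtain ⟨hb1, hbk⟩ := Finset.mem_Icc.1 hb
  have hk : (0 : ℝ) < k := by exact_mod_cast hb1.trans hbk
  have hdiff : ((a' : ℝ) - a) / k = ((a' : ℝ) - 1) / k - ((a : ℝ) - 1) / k := by ring
  have hgap : 26 * (1 / (τ * k)) < 1 / k := by
    rw [mul_one_div, div_lt_div_iff₀ (by positivity) hk]; nlinarith
  rw [abs_le] at h
  have hlt : |((a' : ℝ) - a) / k| < 1 / k := by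
    rw [abs_lt]; constructor <;> linarith [hx.1, hx.2]
  rw [abs_div, abs_of_pos hk, div_lt_div_iff_of_pos_right hk, abs_lt] at hlt
  have h₁ : a' < a + 1 := by exact_mod_cast (by linarith : (a' : ℝ) < a + 1)
  have h₂ : a < a' + 1 := by exact_mod_cast (by linarith : (a : ℝ) < a' + 1)
  omega

/-- the crossing-segment lemma. There is `τ₀ ≥ 2` such that for all
`τ ≥ τ₀`, `k ≥ 1` and `(a,d) ∈ {1,…,k}²`, there is a closed segment `h` intersecting
`t_AB(a',b)` iff `a' = a`, and intersecting `t_CD(c,d')` iff `d' = d`. -/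
theorem stmt_15 :
    ∃ τ₀ : ℝ, 2 ≤ τ₀ ∧ ∀ τ : ℝ, τ₀ ≤ τ → ∀ k : ℕ, 1 ≤ k →
      ∀ a ∈ Finset.Icc 1 k, ∀ d ∈ Finset.Icc 1 k,
        ∃ e₁ e₂ : ℝ × ℝ,
          (∀ a' ∈ Finset.Icc 1 k, ∀ b ∈ Finset.Icc 1 k,
            ((segment ℝ e₁ e₂ ∩ tAB τ k a' b).Nonempty ↔ a' = a)) ∧
          (∀ c ∈ Finset.Icc 1 k, ∀ d' ∈ Finset.Icc 1 k,
            ((segment ℝ e₁ e₂ ∩ tCD τ k c d').Nonempty ↔ d' = d)) := by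
  refine ⟨100, by norm_num, fun τ hτ k hk a ha d hd => ?_⟩
  have hK : 1 / (τ * k) ∈ Icc (0 : ℝ) (1 / 100) := by
    have hk' : (1 : ℝ) ≤ k := by exact_mod_cast hk
    exact ⟨by positivity, one_div_le_one_div_of_le (by norm_num) (by nlinarith)⟩
  set K := 1 / (τ * (k : ℝ))
  set A := ((a : ℝ) - 1) / k
  set D := ((d : ℝ) - 1) / k
  have hA : A ∈ Icc 0 1 := sub_one_div_mem_Icc ha
  have hD : D ∈ Icc 0 1 := sub_one_div_mem_Icc hd
  have hKK : -2 * K ≤ 1 + 2 * K := by linarith [hK.1]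
  refine ⟨crossLine A D K (-2 * K), crossLine A D K (1 + 2 * K), fun a' ha' b hb => ?_,
    fun c hc d' hd' => ?_⟩
  · rw [tAB_eq, AffineMap.segment_inter_segment_nonempty_iff _ hKK]
    constructor
    · rintro ⟨u, hu, μ, hμ, h⟩
      exact eq_of_abs_slotPos_sub_le hτ hb ⟨by linarith [hK.1], le_rfl⟩ <|
        abs_sub_le_of_crossLine_eq_left hA hD hK (slotPos_mem_Icc (by linarith) ha' hb)
          (slotPos_mem_Icc (by linarith) hb ha') hu hμ h
    · rintro rfl
      obtain ⟨hs₀, hs₁⟩ := slotPos_sub_mem_Icc (τ := τ) (a := a') (by linarith) hb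
      exact exists_crossLine_eq_left hA hD hK ⟨by linarith, by linarith [hK.1]⟩
        (slotPos_mem_Icc (by linarith) hb ha')
  · rw [tCD_eq, AffineMap.segment_inter_segment_nonempty_iff _ hKK]
    constructor
    · rintro ⟨u, hu, ν, hν, h⟩
      have := abs_sub_le_of_crossLine_eq_right hA hD hK (slotPos_mem_Icc (by linarith) hc hd')
          (slotPos_mem_Icc (by linarith) hd' hc) hu hν h
      exact eq_of_abs_slotPos_sub_le hτ hc ⟨le_rfl, by linarith [hK.1]⟩ (by rwa [add_zero])
    · rintro rfl
      obtain ⟨hT₀, hT₁⟩ := slotPos_sub_mem_Icc (τ := τ) (a := d') (by linarith) hc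
      exact exists_crossLine_eq_right hA hD hK (slotPos_mem_Icc (by linarith) hc hd')
        ⟨by linarith, by linarith [hK.1]⟩
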